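/- arXiv:1509.00231 — 2 statements merged into one kernel-verified Lean document; each statement's English description precedes it below -/
import Mathlib

section
/- (Uniform ergodicity under γ-controlled perturbations) Let A be a transition matrix on the finite state space S whose induced Markov chain is uniformly ergodic, and let γ ∈ (0,1). Then for every ε > 0 there exists ρ > 0, depending only on A, γ and ε, such that for every transition matrix B with B ⪰_γ A, the Markov chain induced by B is uniformly ergodic with constants R = 1 + ε and ρ: there exists a probability measure π_B on S (the unique invariant measure of B) such that sup_μ ‖B^tμ − π_B‖_TV ≤ (1+ε)e^{−ρt} for all t ≥ 0, the supremum over all probability measures μ on S. -/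
/-!
Uniform ergodicity of `A` makes every column of `A ^ t₀` close to `π_A` in total variation, so
for large `t₀` some row `i` of `A ^ t₀` is bounded below by a constant `c > 0`. The `γ`-control
passes to powers, `B ^ t₀ ≥ γ ^ t₀ A ^ t₀`, so `B ^ t₀` satisfies Doeblin's condition at `i` with
constant `γ ^ t₀ c`, whatever `B` is. Hence `B ^ t₀` contracts zero-sum vectors in `ℓ¹` by the
factor `q = 1 - γ ^ t₀ c < 1`, which yields a unique invariant law `π_B` and
`‖B ^ t μ - π_B‖_TV ≤ q ^ ⌊t / t₀⌋ ≤ (1 + ε) e^{-ρ t}` for a rate `ρ` depending only on `q`, `t₀`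
and `ε`.
-/

open MeasureTheory Finset
open scoped ENNReal

noncomputable section

namespace DiscreteEBSDE

/-- A column-stochastic transition matrix on a finite state space. -/
def IsTransMat {S : Type*} [Fintype S] (B : Matrix S S ℝ) : Prop :=
  (∀ i j, 0 ≤ B i j) ∧ ∀ j, ∑ i, B i j = 1

/-- A probability vector on a finite state space. -/
def IsProbVec {S : Type*} [Fintype S] (μ : S → ℝ) : Prop :=
  (∀ i, 0 ≤ μ i) ∧ ∑ i, μ i = 1

/-- Total variation distance between measures on a finite state space. -/
def tvDist {S : Type*} [Fintype S] (μ ν : S → ℝ) : ℝ := (∑ x, |μ x - ν x|) / 2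

/-- The chain induced by the column-stochastic matrix `B` is uniformly ergodic:
`B^t μ → π` in total variation, at exponential rate, uniformly in the initial law `μ`. -/
def UniformlyErgodic {S : Type*} [Fintype S] [DecidableEq S] (B : Matrix S S ℝ) : Prop :=
  ∃ π : S → ℝ, IsProbVec π ∧ ∃ R ρ : ℝ, 0 < R ∧ 0 < ρ ∧
    ∀ (t : ℕ) (μ : S → ℝ), IsProbVec μ →
      tvDist ((B ^ t).mulVec μ) π ≤ R * Real.exp (-ρ * t)

/-- `(X, Y)` is (under `μ`) a pair of independent copies of the Markov chain with
column-stochastic transition matrix `B`: the Markov property on path cylinders, with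
product transition probabilities. -/
def IsPairChain {S : Type*} {Ω : Type*} [MeasurableSpace Ω] (B : Matrix S S ℝ)
    (μ : Measure Ω) (X Y : ℕ → Ω → S) : Prop :=
  ∀ (t : ℕ) (w v : ℕ → S) (i k : S),
    μ ({ω | X (t + 1) ω = i ∧ Y (t + 1) ω = k} ∩
        {ω | ∀ s ≤ t, X s ω = w s ∧ Y s ω = v s}) =
      ENNReal.ofReal (B i (w t) * B k (v t)) *
        μ {ω | ∀ s ≤ t, X s ω = w s ∧ Y s ω = v s}

/-- The first meeting time of `X` and `Y` at or after time `t₀`, valued in `ℕ∞`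
(`⊤` if they never meet). -/
def meetTime {S : Type*} {Ω : Type*} (X Y : ℕ → Ω → S) (t₀ : ℕ) (ω : Ω) : ℕ∞ :=
  sInf {n : ℕ∞ | ∃ t : ℕ, n = (t : ℕ∞) ∧ t₀ ≤ t ∧ X t ω = Y t ω}

/-- `e^{β T}` for `T : ℕ∞`, equal to `∞` when `T = ∞`. -/
def expVal (β : ℝ) : ℕ∞ → ℝ≥0∞ :=
  WithTop.recTopCoe ⊤ fun m : ℕ => ENNReal.ofReal (Real.exp (β * m))

/-- `j` leads to `i` for the chain with column-stochastic matrix `B`. -/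
def Leads {S : Type*} [Fintype S] [DecidableEq S] (B : Matrix S S ℝ) (j i : S) : Prop :=
  ∃ n : ℕ, 0 < (B ^ n) i j

/-- Two states communicate if each leads to the other. -/
def Communicates {S : Type*} [Fintype S] [DecidableEq S] (B : Matrix S S ℝ)
    (i j : S) : Prop :=
  Leads B i j ∧ Leads B j i

/-- `C` is a communicating class of the chain `B`. -/
def IsCommClass {S : Type*} [Fintype S] [DecidableEq S] (B : Matrix S S ℝ)
    (C : Set S) : Prop :=
  C.Nonempty ∧ ∀ i ∈ C, ∀ j, j ∈ C ↔ Communicates B i j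

/-- `C` is a closed communicating class of the chain `B`. -/
def IsClosedCommClass {S : Type*} [Fintype S] [DecidableEq S] (B : Matrix S S ℝ)
    (C : Set S) : Prop :=
  IsCommClass B C ∧ ∀ j ∈ C, ∀ i, Leads B j i → i ∈ C

/-- The chain `B` is aperiodic: every state in a closed communicating class has
period `1` (every common divisor of its return times is `1`). -/
def AperiodicChain {S : Type*} [Fintype S] [DecidableEq S] (B : Matrix S S ℝ) : Prop :=
  ∀ i : S, (∃ C : Set S, IsClosedCommClass B C ∧ i ∈ C) →
    ∀ d : ℕ, (∀ n : ℕ, 1 ≤ n → 0 < (B ^ n) i i → d ∣ n) → d = 1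

/-- The Nummelin split matrix `𝓑` on the split space `S × Bool` (second coordinate
`true` is the layer `S₁`): columns from `S₀` follow `C = (1-γ)⁻¹(B - γA)`, columns from
`S₁` follow `A`, and the result is split between the layers with masses `1-γ` and `γ`. -/
def splitMatrix {N : ℕ} (γ : ℝ) (A B : Matrix (Fin N) (Fin N) ℝ) :
    Matrix (Fin N × Bool) (Fin N × Bool) ℝ := fun p q =>
  (if p.2 then γ else 1 - γ) *
    (if q.2 then A p.1 q.1 else (1 - γ)⁻¹ * (B p.1 q.1 - γ * A p.1 q.1))

open Matrix Filter Topology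

section Ergodicity

variable {S : Type*} [Fintype S]

theorem isClosed_setOf_isProbVec : IsClosed {μ : S → ℝ | IsProbVec μ} := by
  simp only [IsProbVec, Set.ofPred_and, Set.ofPred_forall]
  exact (isClosed_iInter fun i => isClosed_le continuous_const (continuous_apply i)).inter
    (isClosed_eq (continuous_finsetSum _ fun i _ => continuous_apply i) continuous_const)

theorem IsProbVec.sum_abs_sub_le_two {μ ν : S → ℝ} (hμ : IsProbVec μ) (hν : IsProbVec ν) :
    ∑ i, |μ i - ν i| ≤ 2 := by
  calc ∑ i, |μ i - ν i| ≤ ∑ i, (μ i + ν i) :=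
        sum_le_sum fun i _ => (abs_sub _ _).trans_eq
          (by rw [abs_of_nonneg (hμ.1 i), abs_of_nonneg (hν.1 i)])
    _ = 2 := by rw [sum_add_distrib, hμ.2, hν.2]; norm_num

theorem abs_sub_le_two_mul_tvDist (μ ν : S → ℝ) (i : S) : |μ i - ν i| ≤ 2 * tvDist μ ν := by
  rw [tvDist, mul_div_cancel₀ _ two_ne_zero]
  exact single_le_sum (f := fun x => |μ x - ν x|) (fun _ _ => abs_nonneg _) (mem_univ i)

theorem dist_le_sum_abs_sub (μ ν : S → ℝ) : dist μ ν ≤ ∑ i, |μ i - ν i| :=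
  (dist_pi_le_iff (sum_nonneg fun _ _ => abs_nonneg _)).2 fun i =>
    single_le_sum (f := fun x => |μ x - ν x|) (fun _ _ => abs_nonneg _) (mem_univ i)

/-- Dobrushin's ergodicity coefficient of `M` is at most `q`. -/
def ZeroSumContraction (M : Matrix S S ℝ) (q : ℝ) : Prop :=
  ∀ w : S → ℝ, ∑ j, w j = 0 → ∑ i, |(M *ᵥ w) i| ≤ q * ∑ j, |w j|

theorem zeroSumContraction_of_le_apply {M : Matrix S S ℝ} (hM : ∀ j, ∑ i, M i j = 1)
    {ν : S → ℝ} (hνM : ∀ i j, ν i ≤ M i j) :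
    ZeroSumContraction M (1 - ∑ i, ν i) := by
  intro w hw
  -- Doeblin: on zero-sum vectors `M` acts as `M - ν 1ᵀ`, which is nonnegative with column
  -- sums `1 - ∑ ν`.
  have hMw : ∀ i, (M *ᵥ w) i = ∑ j, (M i j - ν i) * w j := fun i => by
    simp only [mulVec, dotProduct, sub_mul, sum_sub_distrib, ← mul_sum, hw, mul_zero, sub_zero]
  calc ∑ i, |(M *ᵥ w) i| ≤ ∑ i, ∑ j, (M i j - ν i) * |w j| := sum_le_sum fun i _ => by
        rw [hMw]
        refine (abs_sum_le_sum_abs _ _).trans_eq (sum_congr rfl fun j _ => ?_)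
        rw [abs_mul, abs_of_nonneg (sub_nonneg.2 (hνM i j))]
    _ = (1 - ∑ i, ν i) * ∑ j, |w j| := by
        rw [sum_comm, mul_sum]
        simp only [← sum_mul, sum_sub_distrib, hM]

theorem ZeroSumContraction.eq_of_mulVec_eq {M : Matrix S S ℝ} {q : ℝ}
    (h : ZeroSumContraction M q) (hq : q < 1) {μ ν : S → ℝ} (hμ : IsProbVec μ)
    (hν : IsProbVec ν) (hMμ : M *ᵥ μ = μ) (hMν : M *ᵥ ν = ν) : μ = ν := by
  have hle := h (μ - ν) (by simp only [Pi.sub_apply, sum_sub_distrib, hμ.2, hν.2, sub_self])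
  rw [mulVec_sub, hMμ, hMν] at hle
  have hnonneg : 0 ≤ ∑ i, |(μ - ν) i| := sum_nonneg fun _ _ => abs_nonneg _
  have hzero : ∑ i, |(μ - ν) i| = 0 := by nlinarith
  funext i
  exact sub_eq_zero.1 <| abs_eq_zero.1 <|
    (sum_eq_zero_iff_of_nonneg fun _ _ => abs_nonneg _).1 hzero i (mem_univ i)

variable [DecidableEq S]

theorem isTransMat_iff_mem_colStochastic {B : Matrix S S ℝ} :
    IsTransMat B ↔ B ∈ colStochastic ℝ S :=
  mem_colStochastic_iff_sum.symm

theorem isProbVec_single (j : S) : IsProbVec (Pi.single j (1 : ℝ)) :=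
  ⟨(Pi.single_nonneg.2 zero_le_one : (0 : S → ℝ) ≤ Pi.single j 1), by simp⟩

theorem IsProbVec.mulVec {M : Matrix S S ℝ} (hM : M ∈ colStochastic ℝ S) {μ : S → ℝ}
    (hμ : IsProbVec μ) : IsProbVec (M *ᵥ μ) :=
  ⟨nonneg_mulVec_of_mem_colStochastic hM hμ.1, by rw [sum_mulVec_of_mem_colStochastic hM, hμ.2]⟩

theorem pow_apply_le_pow_apply {X Y : Matrix S S ℝ} (hX : ∀ i j, 0 ≤ X i j)
    (hXY : ∀ i j, X i j ≤ Y i j) (n : ℕ) (i j : S) : (X ^ n) i j ≤ (Y ^ n) i j := by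
  induction n generalizing j with
  | zero => rfl
  | succ n ih =>
    rw [pow_succ, pow_succ, mul_apply, mul_apply]
    exact sum_le_sum fun k _ =>
      mul_le_mul (ih k) (hXY k j) (hX k j) ((pow_apply_nonneg hX n i k).trans (ih k))

theorem pow_apply_le_of_smul_le {A B : Matrix S S ℝ} (hA : ∀ i j, 0 ≤ A i j) {γ : ℝ}
    (hγ : 0 ≤ γ) (hBA : ∀ i j, γ * A i j ≤ B i j) (n : ℕ) (i j : S) :
    γ ^ n * (A ^ n) i j ≤ (B ^ n) i j := by
  simpa [smul_pow] using pow_apply_le_pow_apply (X := γ • A)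
    (fun i j => mul_nonneg hγ (hA i j)) hBA n i j

theorem mulVec_pow_of_mulVec_eq {M : Matrix S S ℝ} {π : S → ℝ} (h : M *ᵥ π = π) (n : ℕ) :
    (M ^ n) *ᵥ π = π := by
  induction n with
  | zero => simp
  | succ n ih => rw [pow_succ, ← mulVec_mulVec, h, ih]

theorem zeroSumContraction_of_le_row {M : Matrix S S ℝ} (hM : M ∈ colStochastic ℝ S) {i : S}
    {c : ℝ} (hc : ∀ j, c ≤ M i j) : ZeroSumContraction M (1 - c) := by
  simpa using zeroSumContraction_of_le_apply (sum_col_of_mem_colStochastic hM)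
    (ν := Pi.single i c) fun k j => by
      rcases eq_or_ne k i with rfl | hk
      · simpa using hc j
      · simpa [hk] using nonneg_of_mem_colStochastic hM

theorem ZeroSumContraction.pow {M : Matrix S S ℝ} (hM : M ∈ colStochastic ℝ S) {q : ℝ}
    (hq : 0 ≤ q) (h : ZeroSumContraction M q) (k : ℕ) : ZeroSumContraction (M ^ k) (q ^ k) := by
  induction k with
  | zero => intro w _; simp
  | succ k ih =>
    intro w hw
    rw [pow_succ, ← mulVec_mulVec, pow_succ, mul_assoc]
    exact (ih _ (by rw [sum_mulVec_of_mem_colStochastic hM, hw])).trans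
      (mul_le_mul_of_nonneg_left (h w hw) (pow_nonneg hq k))

theorem ZeroSumContraction.exists_isProbVec_mulVec_eq [Nonempty S] {M : Matrix S S ℝ}
    (hM : M ∈ colStochastic ℝ S) {q : ℝ} (hq0 : 0 ≤ q) (hq1 : q < 1)
    (h : ZeroSumContraction M q) : ∃ π, IsProbVec π ∧ M *ᵥ π = π := by
  obtain ⟨j⟩ := ‹Nonempty S›
  set x : ℕ → S → ℝ := fun k => (M ^ k) *ᵥ Pi.single j 1
  have hx : ∀ k, IsProbVec (x k) := fun k => (isProbVec_single j).mulVec (pow_mem hM k)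
  have hxsucc : ∀ k, x (k + 1) = M *ᵥ x k := fun k => by
    simp only [x, pow_succ', mulVec_mulVec]
  have hdist : ∀ k, dist (x k) (x (k + 1)) ≤ 2 * q ^ k := fun k => by
    have hdiff : x k - x (k + 1) = (M ^ k) *ᵥ (x 0 - x 1) := by
      simp only [x, mulVec_sub, mulVec_mulVec, ← pow_add, pow_zero, one_mulVec]
    calc dist (x k) (x (k + 1)) ≤ ∑ i, |(x k - x (k + 1)) i| := dist_le_sum_abs_sub _ _
      _ ≤ q ^ k * ∑ i, |(x 0 - x 1) i| := by
          rw [hdiff]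
          exact h.pow hM hq0 k _ (by simp only [Pi.sub_apply, sum_sub_distrib, (hx 0).2,
            (hx 1).2, sub_self])
      _ ≤ q ^ k * 2 := mul_le_mul_of_nonneg_left ((hx 0).sum_abs_sub_le_two (hx 1))
          (pow_nonneg hq0 k)
      _ = 2 * q ^ k := mul_comm _ _
  obtain ⟨π, hπ⟩ := cauchySeq_tendsto_of_complete (cauchySeq_of_le_geometric q 2 hq1 hdist)
  refine ⟨π, isClosed_setOf_isProbVec.mem_of_tendsto hπ (Eventually.of_forall hx), ?_⟩
  have hMπ : Tendsto (fun k => M *ᵥ x k) atTop (𝓝 (M *ᵥ π)) :=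
    ((Continuous.matrix_mulVec continuous_const continuous_id).tendsto π).comp hπ
  refine tendsto_nhds_unique (hMπ.congr fun k => (hxsucc k).symm) ?_
  exact hπ.comp (tendsto_add_atTop_nat 1)

theorem tvDist_pow_mulVec_le {B : Matrix S S ℝ} (hB : B ∈ colStochastic ℝ S) {t₀ : ℕ}
    {q : ℝ} (hq : 0 ≤ q) (h : ZeroSumContraction (B ^ t₀) q) {π : S → ℝ} (hπ : IsProbVec π)
    (hBπ : B *ᵥ π = π) (t : ℕ) {μ : S → ℝ} (hμ : IsProbVec μ) :
    tvDist ((B ^ t) *ᵥ μ) π ≤ q ^ (t / t₀) := by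
  set k := t / t₀
  have hν : IsProbVec ((B ^ (t % t₀)) *ᵥ μ) := hμ.mulVec (pow_mem hB _)
  have hdiff : (B ^ t) *ᵥ μ - π = ((B ^ t₀) ^ k) *ᵥ ((B ^ (t % t₀)) *ᵥ μ - π) := by
    rw [mulVec_sub, mulVec_pow_of_mulVec_eq (mulVec_pow_of_mulVec_eq hBπ t₀) k, mulVec_mulVec,
      ← pow_mul, ← pow_add, Nat.div_add_mod]
  have hsum := h.pow (pow_mem hB t₀) hq k ((B ^ (t % t₀)) *ᵥ μ - π)
    (by simp only [Pi.sub_apply, sum_sub_distrib, hν.2, hπ.2, sub_self])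
  calc tvDist ((B ^ t) *ᵥ μ) π = (∑ i, |((B ^ t) *ᵥ μ - π) i|) / 2 := rfl
    _ ≤ q ^ k * 2 / 2 := by
        rw [hdiff]
        gcongr
        exact hsum.trans (mul_le_mul_of_nonneg_left (hν.sum_abs_sub_le_two hπ) (pow_nonneg hq k))
    _ = q ^ k := by ring

theorem exists_invariant_tvDist_le_of_zeroSumContraction [Nonempty S] {B : Matrix S S ℝ}
    (hB : B ∈ colStochastic ℝ S) {t₀ : ℕ} {q : ℝ} (hq0 : 0 ≤ q) (hq1 : q < 1)
    (h : ZeroSumContraction (B ^ t₀) q) :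
    ∃ π, IsProbVec π ∧ B *ᵥ π = π ∧
      ∀ (t : ℕ) (μ : S → ℝ), IsProbVec μ → tvDist ((B ^ t) *ᵥ μ) π ≤ q ^ (t / t₀) := by
  obtain ⟨π, hπ, hB₀π⟩ := h.exists_isProbVec_mulVec_eq (pow_mem hB t₀) hq0 hq1
  -- `B π` is again a fixed point of `B ^ t₀`, which has only one.
  have hBπ : B *ᵥ π = π := h.eq_of_mulVec_eq hq1 (hπ.mulVec hB) hπ
    (by rw [mulVec_mulVec, ← pow_succ, pow_succ', ← mulVec_mulVec, hB₀π]) hB₀π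
  exact ⟨π, hπ, hBπ, fun t μ hμ => tvDist_pow_mulVec_le hB hq0 h hπ hBπ t hμ⟩

theorem UniformlyErgodic.exists_pow_apply_ge {A : Matrix S S ℝ} (hA : UniformlyErgodic A) :
    ∃ (i : S) (c : ℝ) (t₀ : ℕ), 0 < c ∧ 0 < t₀ ∧ ∀ j, c ≤ (A ^ t₀) i j := by
  obtain ⟨π, hπ, R, ρ, -, hρ, hA⟩ := hA
  obtain ⟨i, hi⟩ : ∃ i, 0 < π i := by
    by_contra! h
    linarith [sum_nonpos fun i (_ : i ∈ univ) => h i, hπ.2]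
  have hlim : Tendsto (fun t : ℕ => 2 * (R * Real.exp (-ρ * t))) atTop (𝓝 0) := by
    simpa [Real.exp_neg] using ((Real.tendsto_exp_atTop.comp
      (tendsto_natCast_atTop_atTop.const_mul_atTop hρ)).inv_tendsto_atTop.const_mul R).const_mul 2
  obtain ⟨t₀, hclose, ht₀⟩ :=
    ((hlim.eventually (gt_mem_nhds (half_pos hi))).and (eventually_gt_atTop 0)).exists
  refine ⟨i, π i / 2, t₀, half_pos hi, ht₀, fun j => ?_⟩
  have hcol := abs_sub_le_two_mul_tvDist _ _ i |>.trans <|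
    mul_le_mul_of_nonneg_left (hA t₀ _ (isProbVec_single j)) zero_le_two
  rw [mulVec_single_one, col_apply] at hcol
  linarith [(abs_le.1 hcol).1]

end Ergodicity

theorem exists_pos_pow_div_le_exp {q : ℝ} (hq0 : 0 ≤ q) (hq1 : q < 1) {t₀ : ℕ} (ht₀ : 0 < t₀)
    {ε : ℝ} (hε : 0 < ε) :
    ∃ ρ : ℝ, 0 < ρ ∧ ∀ t : ℕ, q ^ (t / t₀) ≤ (1 + ε) * Real.exp (-ρ * t) := by
  -- The rate `ρ = -log r / t₀` with `r = max q (1 + ε)⁻¹` pays for the incomplete last block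
  -- of `t / t₀` with the factor `(1 + ε) r ≥ 1`.
  set r := max q (1 + ε)⁻¹
  have hr0 : 0 < r := lt_max_of_lt_right (by positivity)
  have hr1 : r < 1 := max_lt hq1 (inv_lt_one_of_one_lt₀ (by linarith))
  refine ⟨-Real.log r / t₀, div_pos (neg_pos.2 (Real.log_neg hr0 hr1)) (by positivity),
    fun t => ?_⟩
  have ht : (t : ℝ) / t₀ ≤ ((t / t₀ + 1 : ℕ) : ℝ) := by
    rw [div_le_iff₀ (by positivity)]
    exact_mod_cast (mul_comm t₀ _ ▸ Nat.lt_mul_div_succ t ht₀).le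
  have hexp : Real.exp (-(-Real.log r / t₀) * t) = r ^ ((t : ℝ) / t₀) := by
    rw [Real.rpow_def_of_pos hr0]; ring_nf
  calc q ^ (t / t₀) ≤ r ^ (t / t₀) := pow_le_pow_left₀ hq0 (le_max_left _ _) _
    _ ≤ ((1 + ε) * r) * r ^ (t / t₀) := by
        refine le_mul_of_one_le_left (by positivity) ?_
        calc (1 : ℝ) = (1 + ε) * (1 + ε)⁻¹ := (mul_inv_cancel₀ (by positivity)).symm
          _ ≤ (1 + ε) * r := by gcongr; exact le_max_right _ _
    _ = (1 + ε) * r ^ (t / t₀ + 1) := by ring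
    _ ≤ (1 + ε) * Real.exp (-(-Real.log r / t₀) * t) := by
        rw [hexp, ← Real.rpow_natCast]
        exact mul_le_mul_of_nonneg_left (Real.rpow_le_rpow_of_exponent_ge hr0 hr1.le ht)
          (by positivity)

/-- **Uniform ergodicity under `γ`-controlled perturbations.** If the chain `A` is
uniformly ergodic and `γ ∈ (0,1)`, then for every `ε > 0` there is a rate `ρ > 0`,
depending only on `A`, `γ` and `ε`, such that every transition matrix `B ⪰_γ A` is
uniformly ergodic with constants `R = 1 + ε` and `ρ`. -/
theorem uniformly_ergodic_perturbation {N : ℕ}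
    (A : Matrix (Fin N) (Fin N) ℝ) (hA : IsTransMat A) (hAerg : UniformlyErgodic A)
    (γ : ℝ) (hγ : γ ∈ Set.Ioo (0 : ℝ) 1) :
    ∀ ε : ℝ, 0 < ε → ∃ ρ : ℝ, 0 < ρ ∧
      ∀ B : Matrix (Fin N) (Fin N) ℝ, IsTransMat B → (∀ i j, γ * A i j ≤ B i j) →
        ∃ πB : Fin N → ℝ, IsProbVec πB ∧ B.mulVec πB = πB ∧
          ∀ (t : ℕ) (μ : Fin N → ℝ), IsProbVec μ →
            tvDist ((B ^ t).mulVec μ) πB ≤ (1 + ε) * Real.exp (-ρ * t) := by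
  rw [isTransMat_iff_mem_colStochastic] at hA
  obtain ⟨i, c, t₀, hc, ht₀, hAc⟩ := hAerg.exists_pow_apply_ge
  have hq0 : 0 ≤ 1 - γ ^ t₀ * c := sub_nonneg.2 <| mul_le_one₀ (pow_le_one₀ hγ.1.le hγ.2.le)
    hc.le ((hAc i).trans (le_one_of_mem_colStochastic (pow_mem hA t₀)))
  have hq1 : 1 - γ ^ t₀ * c < 1 := sub_lt_self _ (mul_pos (pow_pos hγ.1 t₀) hc)
  intro ε hε
  obtain ⟨ρ, hρ, hrate⟩ := exists_pos_pow_div_le_exp hq0 hq1 ht₀ hε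
  refine ⟨ρ, hρ, fun B hB hBA => ?_⟩
  rw [isTransMat_iff_mem_colStochastic] at hB
  have hrow : ∀ j, γ ^ t₀ * c ≤ (B ^ t₀) i j := fun j =>
    (mul_le_mul_of_nonneg_left (hAc j) (pow_nonneg hγ.1.le t₀)).trans
      (pow_apply_le_of_smul_le (fun _ _ => nonneg_of_mem_colStochastic hA) hγ.1.le hBA t₀ i j)
  have hcontr := zeroSumContraction_of_le_row (pow_mem hB t₀) hrow
  have : Nonempty (Fin N) := ⟨i⟩
  obtain ⟨π, hπ, hBπ, hconv⟩ :=
    exists_invariant_tvDist_le_of_zeroSumContraction hB hq0 hq1 hcontr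
  exact ⟨π, hπ, hBπ, fun t μ hμ => (hconv t μ hμ).trans (hrate t)⟩

end DiscreteEBSDE
end
end

section
/- (Exponential moments for the split chains, uniformly in the perturbation) Let A be a transition matrix on S whose induced chain is uniformly ergodic, and let γ ∈ (0,1). Then for every ε > 0 there exists β̃ > 0, depending only on A, γ and ε, such that for every transition matrix B with B ⪰_γ A the following holds: let X̌ and Y̌ be two independent Markov chains on the split space Š, each with transition matrix 𝓑 (built from A, B and γ as in the context), and let Š_meet := inf{t ≥ 0 : X̌_t = Y̌_t}. Then sup_{x̌,y̌∈Š} E_{x̌y̌}[e^{βŠ_meet}] ≤ 1 + ε for all β ∈ [0, β̃], where E_{x̌y̌} denotes expectation conditional on X̌_0 = x̌ and Y̌_0 = y̌. -/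
/-!
Along the layer `S₁` the split chain moves by `γ A`, whatever `B` is. By uniform ergodicity of
`A`, after `t` steps of `A` the laws started from any two states are within total variation
`1/2`, so two independent split chains sit at a common state at time `m = t + 1` with
probability at least `δ = γ^(2m) / (4N)`, uniformly in `B` and in the initial states. The Markov
property then bounds the probability of not having met by time `m K` by `(1 - δ)^K`, and these
geometric tails give `E e^{β T} ≤ 1 + (e^{β m} - 1) / (1 - e^{β m} (1 - δ))`, which tends to
`1` as `β → 0`.
-/

open MeasureTheory Finset
open scoped ENNReal

noncomputable section

namespace DiscreteEBSDE

open Matrix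
open scoped Kronecker

section TransitionMatrix

variable {S : Type*} [Fintype S]

lemma IsProbVec.card_pos {v : S → ℝ} (hv : IsProbVec v) : 0 < Fintype.card S := by
  rw [Fintype.card_pos_iff]
  by_contra h
  rw [not_nonempty_iff] at h
  simpa using hv.2

lemma mulVec_mono_of_nonneg {P : Matrix S S ℝ} (hP : ∀ i j, 0 ≤ P i j) {u v : S → ℝ}
    (huv : u ≤ v) : P *ᵥ u ≤ P *ᵥ v :=
  fun i => Finset.sum_le_sum fun j _ => mul_le_mul_of_nonneg_left (huv j) (hP i j)

lemma IsTransMat.sum_mulVec {P : Matrix S S ℝ} (hP : IsTransMat P) (v : S → ℝ) :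
    ∑ i, (P *ᵥ v) i = ∑ j, v j := by
  simp only [Matrix.mulVec, dotProduct]
  rw [Finset.sum_comm]
  simp [← Finset.sum_mul, hP.2]

lemma IsTransMat.isProbVec_mulVec {P : Matrix S S ℝ} (hP : IsTransMat P) {v : S → ℝ}
    (hv : IsProbVec v) : IsProbVec (P *ᵥ v) :=
  ⟨fun i => Finset.sum_nonneg fun j _ => mul_nonneg (hP.1 i j) (hv.1 j),
    (hP.sum_mulVec v).trans hv.2⟩

lemma IsTransMat.mul {P Q : Matrix S S ℝ} (hP : IsTransMat P) (hQ : IsTransMat Q) :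
    IsTransMat (P * Q) :=
  ⟨fun i j => Finset.sum_nonneg fun k _ => mul_nonneg (hP.1 i k) (hQ.1 k j),
    fun j => (hP.sum_mulVec fun k => Q k j).trans (hQ.2 j)⟩

lemma IsTransMat.pow [DecidableEq S] {P : Matrix S S ℝ} (hP : IsTransMat P) (n : ℕ) :
    IsTransMat (P ^ n) := by
  induction n with
  | zero =>
    rw [pow_zero]
    exact ⟨fun i j => by rw [Matrix.one_apply]; positivity, fun j => by simp [Matrix.one_apply]⟩
  | succ n ih => rw [pow_succ]; exact ih.mul hP

lemma IsTransMat.kronecker {T : Type*} [Fintype T] {P : Matrix S S ℝ} {Q : Matrix T T ℝ}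
    (hP : IsTransMat P) (hQ : IsTransMat Q) : IsTransMat (P ⊗ₖ Q) :=
  ⟨fun r t => mul_nonneg (hP.1 r.1 t.1) (hQ.1 r.2 t.2), fun t => by
    simp [Fintype.sum_prod_type, ← Finset.mul_sum, hP.2, hQ.2]⟩

lemma tvDist_comm (u v : S → ℝ) : tvDist u v = tvDist v u := by
  simp only [tvDist, abs_sub_comm]

lemma tvDist_triangle (u v w : S → ℝ) : tvDist u w ≤ tvDist u v + tvDist v w := by
  simp only [tvDist, ← add_div, ← Finset.sum_add_distrib]
  gcongr with i
  exact abs_sub_le _ _ _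

/-- Two laws at total variation distance at most `1/2` overlap by at least `1/2`, and
Cauchy–Schwarz turns the overlap into a lower bound on the probability that independent
samples coincide. -/
lemma one_div_four_le_card_mul_sum_mul {u v : S → ℝ} (hu : IsProbVec u) (hv : IsProbVec v)
    (huv : tvDist u v ≤ 1 / 2) : 1 / 4 ≤ Fintype.card S * ∑ i, u i * v i := by
  have hmin : ∀ i, 2 * min (u i) (v i) = u i + v i - |u i - v i| := by
    intro i
    rcases le_total (u i) (v i) with h | h
    · rw [min_eq_left h, abs_of_nonpos (by linarith)]; ring
    · rw [min_eq_right h, abs_of_nonneg (by linarith)]; ring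
  have hoverlap : 1 / 2 ≤ ∑ i, min (u i) (v i) := by
    have h2 := Finset.sum_congr rfl fun i (_ : i ∈ Finset.univ) => hmin i
    rw [← Finset.mul_sum, Finset.sum_sub_distrib, Finset.sum_add_distrib, hu.2, hv.2] at h2
    unfold tvDist at huv
    linarith
  have hcs : (∑ i, min (u i) (v i)) ^ 2 ≤ Fintype.card S * ∑ i, min (u i) (v i) ^ 2 := by
    simpa using sq_sum_le_card_mul_sum_sq (s := Finset.univ) (f := fun i => min (u i) (v i))
  have hsq : ∑ i, min (u i) (v i) ^ 2 ≤ ∑ i, u i * v i :=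
    Finset.sum_le_sum fun i _ => by
      rw [sq]
      exact mul_le_mul (min_le_left _ _) (min_le_right _ _) (le_min (hu.1 i) (hv.1 i)) (hu.1 i)
  nlinarith [Fintype.card S]

lemma UniformlyErgodic.exists_tvDist_pow_mulVec_le [DecidableEq S] {A : Matrix S S ℝ}
    (hA : UniformlyErgodic A) {η : ℝ} (hη : 0 < η) :
    ∃ t : ℕ, ∀ u v, IsProbVec u → IsProbVec v → tvDist (A ^ t *ᵥ u) (A ^ t *ᵥ v) ≤ η := by
  obtain ⟨π, -, R, ρ, -, hρ, hconv⟩ := hA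
  have hlim : Filter.Tendsto (fun t : ℕ => R * Real.exp (-ρ * t)) Filter.atTop (nhds 0) := by
    simpa using tendsto_const_nhds.mul (Real.tendsto_exp_atBot.comp
      (tendsto_natCast_atTop_atTop.const_mul_atTop_of_neg (neg_neg_of_pos hρ)))
  obtain ⟨t, ht⟩ := (hlim.eventually (ge_mem_nhds (half_pos hη))).exists
  refine ⟨t, fun u v hu hv => ?_⟩
  calc tvDist (A ^ t *ᵥ u) (A ^ t *ᵥ v)
      ≤ tvDist (A ^ t *ᵥ u) π + tvDist π (A ^ t *ᵥ v) := tvDist_triangle _ _ _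
    _ ≤ η / 2 + η / 2 := by
      rw [tvDist_comm π]
      gcongr
      exacts [(hconv t u hu).trans ht, (hconv t v hv).trans ht]
    _ = η := add_halves η

end TransitionMatrix

def meetProb {S : Type*} [Fintype S] [DecidableEq S] (P : Matrix S S ℝ) (m : ℕ) (x y : S) : ℝ :=
  ∑ a, (P ^ m) a x * (P ^ m) a y

section SplitMatrix

variable {N : ℕ} {γ : ℝ} {A B : Matrix (Fin N) (Fin N) ℝ}

/-- Column `x.1` of `C` (for `x ∈ S₀`) or of `A` (for `x ∈ S₁`); column `x` of the split
matrix is its split. -/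
def splitBaseCol (γ : ℝ) (A B : Matrix (Fin N) (Fin N) ℝ) (x : Fin N × Bool) : Fin N → ℝ :=
  fun i => if x.2 then A i x.1 else (1 - γ)⁻¹ * (B i x.1 - γ * A i x.1)

lemma splitMatrix_apply (p q : Fin N × Bool) :
    splitMatrix γ A B p q = (if p.2 then γ else 1 - γ) * splitBaseCol γ A B q p.1 :=
  rfl

lemma isProbVec_splitBaseCol (hA : IsTransMat A) (hB : IsTransMat B)
    (hγ : γ ∈ Set.Ioo (0 : ℝ) 1) (hBA : ∀ i j, γ * A i j ≤ B i j) (x : Fin N × Bool) :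
    IsProbVec (splitBaseCol γ A B x) := by
  have hγ1 : 0 < 1 - γ := sub_pos.2 hγ.2
  rcases x with ⟨j, _ | _⟩
  · refine ⟨fun i => mul_nonneg (inv_nonneg.2 hγ1.le) (sub_nonneg.2 (hBA i j)), ?_⟩
    simp only [splitBaseCol, Bool.false_eq_true, if_false]
    rw [← Finset.mul_sum, Finset.sum_sub_distrib, ← Finset.mul_sum, hB.2, hA.2, mul_one,
      inv_mul_cancel₀ hγ1.ne']
  · exact ⟨fun i => hA.1 i j, hA.2 j⟩

lemma isTransMat_splitMatrix (hA : IsTransMat A) (hB : IsTransMat B)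
    (hγ : γ ∈ Set.Ioo (0 : ℝ) 1) (hBA : ∀ i j, γ * A i j ≤ B i j) :
    IsTransMat (splitMatrix γ A B) := by
  have hcol := isProbVec_splitBaseCol hA hB hγ hBA
  refine ⟨fun p q => mul_nonneg ?_ ((hcol q).1 p.1), fun q => ?_⟩
  · split_ifs
    exacts [hγ.1.le, sub_nonneg.2 hγ.2.le]
  · simp only [splitMatrix_apply, Fintype.sum_prod_type, Fintype.sum_bool, if_true,
      Bool.false_eq_true, if_false, ← add_mul, add_sub_cancel, one_mul, (hcol q).2]

lemma mul_pow_mulVec_splitBaseCol_le (hA : IsTransMat A) (hB : IsTransMat B)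
    (hγ : γ ∈ Set.Ioo (0 : ℝ) 1) (hBA : ∀ i j, γ * A i j ≤ B i j) (x : Fin N × Bool)
    (s : ℕ) (i : Fin N) :
    γ ^ (s + 1) * (A ^ s *ᵥ splitBaseCol γ A B x) i ≤
      (splitMatrix γ A B ^ (s + 1)) (i, true) x := by
  have hP := isTransMat_splitMatrix hA hB hγ hBA
  induction s generalizing i with
  | zero => simp [splitMatrix_apply]
  | succ s ih =>
    calc γ ^ (s + 1 + 1) * (A ^ (s + 1) *ᵥ splitBaseCol γ A B x) i
        = ∑ j, γ * A i j * (γ ^ (s + 1) * (A ^ s *ᵥ splitBaseCol γ A B x) j) := by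
          rw [pow_succ' γ, pow_succ' A, ← Matrix.mulVec_mulVec, Matrix.mulVec, dotProduct,
            Finset.mul_sum]
          exact Finset.sum_congr rfl fun j _ => by ring
      _ ≤ ∑ j, splitMatrix γ A B (i, true) (j, true) * (splitMatrix γ A B ^ (s + 1)) (j, true) x :=
          Finset.sum_le_sum fun j _ =>
            mul_le_mul_of_nonneg_left (ih j) (mul_nonneg hγ.1.le (hA.1 i j))
      _ ≤ ∑ q, splitMatrix γ A B (i, true) q * (splitMatrix γ A B ^ (s + 1)) q x := by
          rw [Fintype.sum_prod_type]
          gcongr with j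
          rw [Fintype.sum_bool]
          exact le_add_of_nonneg_right (mul_nonneg (hP.1 _ _) ((hP.pow _).1 _ _))
      _ = (splitMatrix γ A B ^ (s + 1 + 1)) (i, true) x := by
          rw [pow_succ' _ (s + 1), Matrix.mul_apply]

lemma exists_le_meetProb_splitMatrix (hA : IsTransMat A) (hAerg : UniformlyErgodic A)
    (hγ : γ ∈ Set.Ioo (0 : ℝ) 1) :
    ∃ m, 0 < m ∧ ∃ δ, 0 < δ ∧ δ ≤ 1 ∧ ∀ B, IsTransMat B → (∀ i j, γ * A i j ≤ B i j) →
      ∀ x y, δ ≤ meetProb (splitMatrix γ A B) m x y := by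
  have hN : 0 < N := by
    obtain ⟨π, hπ, -⟩ := hAerg
    simpa using hπ.card_pos
  obtain ⟨t, ht⟩ := hAerg.exists_tvDist_pow_mulVec_le one_half_pos
  have hN' : (0 : ℝ) < N := by exact_mod_cast hN
  have hγm : γ ^ (t + 1) ≤ 1 := pow_le_one₀ hγ.1.le hγ.2.le
  refine ⟨t + 1, t.succ_pos, (γ ^ (t + 1)) ^ 2 / (4 * N), by have := hγ.1; positivity, ?_, ?_⟩
  · rw [div_le_one (by positivity)]
    nlinarith [(by exact_mod_cast hN : (1 : ℝ) ≤ N), pow_pos hγ.1 (t + 1)]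
  intro B hB hBA x y
  set P := splitMatrix γ A B
  have hP := (isTransMat_splitMatrix hA hB hγ hBA).pow (t + 1)
  have hcol := isProbVec_splitBaseCol hA hB hγ hBA
  set u := A ^ t *ᵥ splitBaseCol γ A B x
  set v := A ^ t *ᵥ splitBaseCol γ A B y
  have hu : IsProbVec u := (hA.pow t).isProbVec_mulVec (hcol x)
  have hv : IsProbVec v := (hA.pow t).isProbVec_mulVec (hcol y)
  have hoverlap := one_div_four_le_card_mul_sum_mul hu hv (ht _ _ (hcol x) (hcol y))
  rw [Fintype.card_fin] at hoverlap
  have hlow := mul_pow_mulVec_splitBaseCol_le hA hB hγ hBA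
  calc (γ ^ (t + 1)) ^ 2 / (4 * N) = (γ ^ (t + 1)) ^ 2 * (1 / 4) / N := by ring
    _ ≤ (γ ^ (t + 1)) ^ 2 * (N * ∑ i, u i * v i) / N := by gcongr
    _ = ∑ i, γ ^ (t + 1) * u i * (γ ^ (t + 1) * v i) := by
        rw [mul_div_assoc, mul_div_cancel_left₀ _ hN'.ne', Finset.mul_sum]
        exact Finset.sum_congr rfl fun i _ => by ring
    _ ≤ ∑ i, (P ^ (t + 1)) (i, true) x * (P ^ (t + 1)) (i, true) y :=
        Finset.sum_le_sum fun i _ => mul_le_mul (hlow x t i) (hlow y t i)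
          (mul_nonneg (pow_nonneg hγ.1.le _) (hv.1 i)) (hP.1 _ _)
    _ ≤ meetProb P (t + 1) x y := by
        rw [meetProb, Fintype.sum_prod_type]
        gcongr with i
        rw [Fintype.sum_bool]
        exact le_add_of_nonneg_right (mul_nonneg (hP.1 _ _) (hP.1 _ _))

end SplitMatrix

section KilledPairChain

variable {S : Type*} [Fintype S] [DecidableEq S]

lemma sum_indicator_compl_diagonal (g : S × S → ℝ) :
    ∑ r, (Set.diagonal S)ᶜ.indicator g r = ∑ r, g r - ∑ a, g (a, a) := by
  have hdiag : ∑ r, (Set.diagonal S).indicator g r = ∑ a, g (a, a) := by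
    simp [Fintype.sum_prod_type, Set.indicator_apply]
  rw [Set.indicator_compl]
  simp only [Pi.sub_apply, Finset.sum_sub_distrib, hdiag]

omit [DecidableEq S] in
lemma sum_kronecker_mulVec_diag (M : Matrix S S ℝ) (g : S × S → ℝ) :
    ∑ a, ((M ⊗ₖ M) *ᵥ g) (a, a) = ∑ t, (∑ a, M a t.1 * M a t.2) * g t := by
  simp only [mulVec, dotProduct, Finset.sum_mul]
  exact Finset.sum_comm

/-- `f n` stands for the no-meeting masses at time `n` of two independent copies of `P`, which
evolve by `P ⊗ₖ P` killed on the diagonal. -/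
lemma IsTransMat.sum_add_le_of_killed_on_diagonal {P : Matrix S S ℝ} (hP : IsTransMat P)
    {m : ℕ} (hm : 0 < m) {δ : ℝ} (hδ : ∀ x y, δ ≤ meetProb P m x y) {f : ℕ → S × S → ℝ}
    (hf0 : ∀ n, 0 ≤ f n) (hf : ∀ n, f (n + 1) = (Set.diagonal S)ᶜ.indicator ((P ⊗ₖ P) *ᵥ f n))
    (n : ℕ) : ∑ r, f (n + m) r ≤ (1 - δ) * ∑ r, f n r := by
  have hPP := hP.kronecker hP
  have hdom : ∀ s, f (n + s) ≤ ((P ^ s) ⊗ₖ (P ^ s)) *ᵥ f n := by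
    intro s
    induction s with
    | zero => simp
    | succ s ih =>
      rw [← add_assoc, hf, pow_succ', Matrix.mul_kronecker_mul, ← mulVec_mulVec]
      exact (Set.indicator_le_self' fun r _ => Finset.sum_nonneg fun t _ =>
        mul_nonneg (hPP.1 r t) (hf0 _ t)).trans (mulVec_mono_of_nonneg hPP.1 ih)
  obtain ⟨k, rfl⟩ := Nat.exists_eq_succ_of_ne_zero hm.ne'
  set g := ((P ^ (k + 1)) ⊗ₖ (P ^ (k + 1))) *ᵥ f n with hg
  have hkill : f (n + (k + 1)) ≤ (Set.diagonal S)ᶜ.indicator g := by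
    rw [hg, ← add_assoc, hf, pow_succ', Matrix.mul_kronecker_mul, ← mulVec_mulVec]
    exact Set.indicator_mono (mulVec_mono_of_nonneg hPP.1 (hdom k))
  have hmeet : δ * ∑ t, f n t ≤ ∑ a, g (a, a) := by
    rw [sum_kronecker_mulVec_diag, Finset.mul_sum]
    exact Finset.sum_le_sum fun t _ => mul_le_mul_of_nonneg_right (hδ t.1 t.2) (hf0 n t)
  calc ∑ r, f (n + (k + 1)) r ≤ ∑ r, (Set.diagonal S)ᶜ.indicator g r :=
        Finset.sum_le_sum fun r _ => hkill r
    _ = ∑ t, f n t - ∑ a, g (a, a) := by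
        rw [sum_indicator_compl_diagonal, ((hP.pow _).kronecker (hP.pow _)).sum_mulVec]
    _ ≤ (1 - δ) * ∑ t, f n t := by linarith

end KilledPairChain

section PairChain

def pairAt {E Ω : Type*} (X Y : ℕ → Ω → E) (t : ℕ) (ω : Ω) : E × E := (X t ω, Y t ω)

def pairPath {E Ω : Type*} (X Y : ℕ → Ω → E) (n : ℕ) (ω : Ω) : Fin (n + 1) → E × E :=
  fun s => pairAt X Y s ω

def apartUpTo {E Ω : Type*} (X Y : ℕ → Ω → E) (n : ℕ) : Set Ω := {ω | ∀ s ≤ n, X s ω ≠ Y s ω}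

def apartUpToAt {E Ω : Type*} (X Y : ℕ → Ω → E) (n : ℕ) (r : E × E) : Set Ω :=
  pairAt X Y n ⁻¹' {r} ∩ apartUpTo X Y n

variable {E Ω : Type*} {X Y : ℕ → Ω → E}

lemma apartUpToAt_eq_pairPath_preimage (n : ℕ) (r : E × E) :
    apartUpToAt X Y n r =
      pairPath X Y n ⁻¹' {u | (∀ s, u s ∉ Set.diagonal E) ∧ u (Fin.last n) = r} := by
  ext ω
  simp [apartUpToAt, apartUpTo, pairPath, pairAt, Fin.forall_iff, and_comm]

lemma apartUpToAt_succ_of_notMem_diagonal {r : E × E} (hr : r ∉ Set.diagonal E) (n : ℕ) :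
    apartUpToAt X Y (n + 1) r = pairAt X Y (n + 1) ⁻¹' {r} ∩ apartUpTo X Y n := by
  ext ω
  simp only [apartUpToAt, apartUpTo, Set.mem_inter_iff, Set.mem_preimage, Set.mem_singleton_iff,
    pairAt]
  refine and_congr_right fun hω => ⟨fun h s hs => h s (hs.trans n.le_succ), fun h s hs => ?_⟩
  rcases hs.lt_or_eq with hs | rfl
  · exact h s (Nat.lt_succ_iff.1 hs)
  · exact fun heq => hr (by simpa [← hω] using heq)

lemma apartUpToAt_of_mem_diagonal {r : E × E} (hr : r ∈ Set.diagonal E) (n : ℕ) :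
    apartUpToAt X Y n r = ∅ := by
  ext ω
  simp only [apartUpToAt, apartUpTo, Set.mem_inter_iff, Set.mem_preimage, Set.mem_singleton_iff,
    pairAt, Set.mem_empty_iff_false, iff_false, not_and]
  rintro rfl h
  exact h n le_rfl hr

variable [Fintype E] [MeasurableSpace Ω]

lemma measurableSet_preimage_of_countable {α : Type*} [Countable α] {f : Ω → α}
    (hf : ∀ a, MeasurableSet (f ⁻¹' {a})) (s : Set α) : MeasurableSet (f ⁻¹' s) := by
  rw [← Set.biUnion_preimage_singleton]
  exact .biUnion s.to_countable fun a _ => hf a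

lemma measurableSet_pairAt_preimage (hX : ∀ t p, MeasurableSet {ω | X t ω = p})
    (hY : ∀ t p, MeasurableSet {ω | Y t ω = p}) (t : ℕ) (s : Set (E × E)) :
    MeasurableSet (pairAt X Y t ⁻¹' s) := by
  refine measurableSet_preimage_of_countable (fun r => ?_) s
  convert (hX t r.1).inter (hY t r.2) using 1
  ext ω
  simp [pairAt, Prod.ext_iff]

lemma measurableSet_pairPath_preimage (hX : ∀ t p, MeasurableSet {ω | X t ω = p})
    (hY : ∀ t p, MeasurableSet {ω | Y t ω = p}) (n : ℕ) (U : Set (Fin (n + 1) → E × E)) :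
    MeasurableSet (pairPath X Y n ⁻¹' U) := by
  refine measurableSet_preimage_of_countable (fun u => ?_) U
  have hfib : pairPath X Y n ⁻¹' {u} = ⋂ s : Fin (n + 1), pairAt X Y s ⁻¹' {u s} := by
    ext ω
    simp [pairPath, funext_iff]
  rw [hfib]
  exact .iInter fun s => measurableSet_pairAt_preimage hX hY s _

lemma measurableSet_apartUpTo (hX : ∀ t p, MeasurableSet {ω | X t ω = p})
    (hY : ∀ t p, MeasurableSet {ω | Y t ω = p}) (n : ℕ) : MeasurableSet (apartUpTo X Y n) := by
  have h : apartUpTo X Y n = ⋂ s ≤ n, pairAt X Y s ⁻¹' (Set.diagonal E)ᶜ := by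
    ext ω
    simp [apartUpTo, pairAt]
  rw [h]
  exact .biInter (Set.to_countable _) fun s _ => measurableSet_pairAt_preimage hX hY s _

end PairChain

section PairChainMeasure

variable {E Ω : Type*} [MeasurableSpace Ω] {X Y : ℕ → Ω → E} {P : Matrix E E ℝ} {μ : Measure Ω}

lemma IsPairChain.measure_inter_pairPath_preimage_singleton (hchain : IsPairChain P μ X Y)
    (n : ℕ) (u : Fin (n + 1) → E × E) (r : E × E) :
    μ (pairAt X Y (n + 1) ⁻¹' {r} ∩ pairPath X Y n ⁻¹' {u}) =
      ENNReal.ofReal (P r.1 (u (Fin.last n)).1 * P r.2 (u (Fin.last n)).2) *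
        μ (pairPath X Y n ⁻¹' {u}) := by
  set w : ℕ → E × E := fun s => u ⟨min s n, Nat.lt_succ_of_le (min_le_right s n)⟩
  have hcyl : pairPath X Y n ⁻¹' {u} = {ω | ∀ s ≤ n, X s ω = (w s).1 ∧ Y s ω = (w s).2} := by
    ext ω
    simp only [Set.mem_preimage, Set.mem_singleton_iff, funext_iff, Fin.forall_iff,
      Nat.lt_succ_iff, pairPath, pairAt, Prod.ext_iff, w]
    refine forall₂_congr fun s hs => ?_
    simp only [min_eq_left hs]
  have hnext : pairAt X Y (n + 1) ⁻¹' {r} = {ω | X (n + 1) ω = r.1 ∧ Y (n + 1) ω = r.2} := by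
    ext ω
    simp [pairAt, Prod.ext_iff]
  have hlast : w n = u (Fin.last n) := by simp [w, Fin.last]
  rw [hcyl, hnext, hchain n (fun s => (w s).1) (fun s => (w s).2) r.1 r.2, hlast]

variable [Fintype E]

lemma IsPairChain.measure_inter_pairPath_preimage (hchain : IsPairChain P μ X Y)
    (hX : ∀ t p, MeasurableSet {ω | X t ω = p}) (hY : ∀ t p, MeasurableSet {ω | Y t ω = p})
    {n : ℕ} {U : Set (Fin (n + 1) → E × E)} {r' : E × E} (hU : ∀ u ∈ U, u (Fin.last n) = r')
    (r : E × E) :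
    μ (pairAt X Y (n + 1) ⁻¹' {r} ∩ pairPath X Y n ⁻¹' U) =
      ENNReal.ofReal (P r.1 r'.1 * P r.2 r'.2) * μ (pairPath X Y n ⁻¹' U) := by
  obtain ⟨V, rfl⟩ := U.toFinite.exists_finset_coe
  have hfib u : MeasurableSet (pairPath X Y n ⁻¹' {u}) := measurableSet_pairPath_preimage hX hY n _
  rw [Set.inter_comm, ← Measure.restrict_apply (measurableSet_pairPath_preimage hX hY n _),
    ← sum_measure_preimage_singleton V fun u _ => hfib u,
    ← sum_measure_preimage_singleton V fun u _ => hfib u, Finset.mul_sum]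
  refine Finset.sum_congr rfl fun u hu => ?_
  rw [Measure.restrict_apply (hfib u), Set.inter_comm,
    hchain.measure_inter_pairPath_preimage_singleton, hU u hu]

lemma measureReal_eq_sum_measureReal_pairAt_preimage_inter [IsFiniteMeasure μ]
    (hX : ∀ t p, MeasurableSet {ω | X t ω = p}) (hY : ∀ t p, MeasurableSet {ω | Y t ω = p})
    (n : ℕ) (G : Set Ω) :
    μ.real G = ∑ r, μ.real (pairAt X Y n ⁻¹' {r} ∩ G) := by
  have h := sum_measureReal_preimage_singleton (μ := μ.restrict G) Finset.univ
    fun r _ => measurableSet_pairAt_preimage hX hY n {r}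
  simp only [Finset.coe_univ, Set.preimage_univ, measureReal_restrict_apply MeasurableSet.univ,
    Set.univ_inter, measureReal_restrict_apply (measurableSet_pairAt_preimage hX hY n _)] at h
  exact h.symm

lemma sum_measureReal_apartUpToAt [IsFiniteMeasure μ]
    (hX : ∀ t p, MeasurableSet {ω | X t ω = p}) (hY : ∀ t p, MeasurableSet {ω | Y t ω = p})
    (n : ℕ) : ∑ r, μ.real (apartUpToAt X Y n r) = μ.real (apartUpTo X Y n) :=
  (measureReal_eq_sum_measureReal_pairAt_preimage_inter hX hY n _).symm

lemma IsPairChain.measureReal_apartUpToAt_succ [IsFiniteMeasure μ] (hP : IsTransMat P)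
    (hchain : IsPairChain P μ X Y) (hX : ∀ t p, MeasurableSet {ω | X t ω = p})
    (hY : ∀ t p, MeasurableSet {ω | Y t ω = p}) (n : ℕ) :
    (fun r => μ.real (apartUpToAt X Y (n + 1) r)) =
      (Set.diagonal E)ᶜ.indicator ((P ⊗ₖ P) *ᵥ fun r => μ.real (apartUpToAt X Y n r)) := by
  funext r
  by_cases hr : r ∈ Set.diagonal E
  · rw [apartUpToAt_of_mem_diagonal hr, Set.indicator_of_notMem (by simpa using hr),
      measureReal_empty]
  rw [Set.indicator_of_mem hr, apartUpToAt_succ_of_notMem_diagonal hr,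
    measureReal_eq_sum_measureReal_pairAt_preimage_inter hX hY n]
  refine Finset.sum_congr rfl fun r' _ => ?_
  have hstep : μ.real (pairAt X Y (n + 1) ⁻¹' {r} ∩ apartUpToAt X Y n r') =
      P r.1 r'.1 * P r.2 r'.2 * μ.real (apartUpToAt X Y n r') := by
    rw [apartUpToAt_eq_pairPath_preimage, measureReal_def,
      hchain.measure_inter_pairPath_preimage hX hY (fun u hu => hu.2) r, ENNReal.toReal_mul,
      ENNReal.toReal_ofReal (mul_nonneg (hP.1 _ _) (hP.1 _ _)), ← measureReal_def]
  rw [Set.inter_left_comm, show pairAt X Y n ⁻¹' {r'} ∩ apartUpTo X Y n = apartUpToAt X Y n r'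
    from rfl, hstep]
  rfl

lemma IsPairChain.measureReal_apartUpTo_mul_le [DecidableEq E] [IsProbabilityMeasure μ]
    (hP : IsTransMat P) (hchain : IsPairChain P μ X Y)
    (hX : ∀ t p, MeasurableSet {ω | X t ω = p}) (hY : ∀ t p, MeasurableSet {ω | Y t ω = p})
    {m : ℕ} (hm : 0 < m) {δ : ℝ} (hδ1 : δ ≤ 1) (hδ : ∀ x y, δ ≤ meetProb P m x y) (K : ℕ) :
    μ.real (apartUpTo X Y (m * K)) ≤ (1 - δ) ^ K := by
  have hcontract n := hP.sum_add_le_of_killed_on_diagonal hm hδ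
    (f := fun n r => μ.real (apartUpToAt X Y n r)) (fun _ _ => measureReal_nonneg)
    (hchain.measureReal_apartUpToAt_succ hP hX hY) n
  simp only [sum_measureReal_apartUpToAt hX hY] at hcontract
  induction K with
  | zero => simp
  | succ K ih =>
    calc μ.real (apartUpTo X Y (m * (K + 1))) ≤ (1 - δ) * μ.real (apartUpTo X Y (m * K)) :=
          hcontract _
      _ ≤ (1 - δ) * (1 - δ) ^ K := mul_le_mul_of_nonneg_left ih (sub_nonneg.2 hδ1)
      _ = (1 - δ) ^ (K + 1) := (pow_succ' _ _).symm

end PairChainMeasure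

lemma setOf_natCast_lt_meetTime_zero {E Ω : Type*} {X Y : ℕ → Ω → E} (n : ℕ) :
    {ω | (n : ℕ∞) < meetTime X Y 0 ω} = apartUpTo X Y n := by
  ext ω
  rw [Set.mem_ofPred_eq, ← ENat.add_one_le_iff (ENat.natCast_ne_top n), meetTime, le_sInf_iff]
  constructor
  · intro h s hs heq
    have hns : ((n + 1 : ℕ) : ℕ∞) ≤ s := by exact_mod_cast h s ⟨s, rfl, s.zero_le, heq⟩
    exact absurd (Nat.cast_le.1 hns) (by omega)
  · rintro h _ ⟨t, rfl, -, heq⟩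
    have hnt : n < t := by
      by_contra! ht
      exact h t ht heq
    exact_mod_cast hnt

lemma expVal_natCast_le {β : ℝ} (hβ : 0 ≤ β) {m : ℕ} (hm : 0 < m) (t : ℕ) :
    expVal β t ≤ 1 + ∑' K : ℕ, if m * K < t then
      ENNReal.ofReal ((Real.exp (β * m) - 1) * Real.exp (β * m) ^ K) else 0 := by
  set c := Real.exp (β * m)
  have hc : 1 ≤ c := Real.one_le_exp (by positivity)
  have hk : ∀ K, K < t ⌈/⌉ m ↔ m * K < t := fun K => (gc_mul_ceilDiv hm).lt_iff_lt
  calc expVal β t = ENNReal.ofReal (Real.exp (β * t)) := rfl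
    _ ≤ ENNReal.ofReal (c ^ (t ⌈/⌉ m)) := by
        rw [← Real.exp_nat_mul]
        refine ENNReal.ofReal_le_ofReal (Real.exp_le_exp.2 ?_)
        have ht : (t : ℝ) ≤ m * (t ⌈/⌉ m : ℕ) := by exact_mod_cast le_smul_ceilDiv hm
        nlinarith
    _ = 1 + ∑ K ∈ Finset.range (t ⌈/⌉ m), ENNReal.ofReal ((c - 1) * c ^ K) := by
        have hterm K : 0 ≤ (c - 1) * c ^ K :=
          mul_nonneg (sub_nonneg.2 hc) (pow_nonneg (zero_le_one.trans hc) K)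
        have hgeom : c ^ (t ⌈/⌉ m) = 1 + ∑ K ∈ Finset.range (t ⌈/⌉ m), (c - 1) * c ^ K := by
          rw [← Finset.mul_sum, mul_comm, geom_sum_mul]
          ring
        rw [hgeom, ENNReal.ofReal_add zero_le_one (Finset.sum_nonneg fun K _ => hterm K),
          ENNReal.ofReal_one, ENNReal.ofReal_sum_of_nonneg fun K _ => hterm K]
    _ ≤ 1 + ∑' K : ℕ, if m * K < t then ENNReal.ofReal ((c - 1) * c ^ K) else 0 := by
        gcongr
        refine (Finset.sum_le_sum fun K hK => ?_).trans (ENNReal.sum_le_tsum _)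
        rw [if_pos ((hk K).1 (Finset.mem_range.1 hK))]

/-- Geometric tails of `T` on the scale `m` control its exponential moments, via
`e^{β T} ≤ 1 + ∑_K [m K < T] (e^{β m} - 1) e^{β m K}`. -/
lemma lintegral_expVal_le_of_tail {Ω : Type*} [MeasurableSpace Ω] {μ : Measure Ω}
    [IsProbabilityMeasure μ] {T : Ω → ℕ∞} (hT : ∀ n : ℕ, MeasurableSet {ω | (n : ℕ∞) < T ω})
    {β q : ℝ} {m : ℕ} (hβ : 0 ≤ β) (hm : 0 < m) (hq : 0 ≤ q) (hcq : Real.exp (β * m) * q < 1)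
    (htail : ∀ K : ℕ, μ {ω | ((m * K : ℕ) : ℕ∞) < T ω} ≤ ENNReal.ofReal (q ^ K)) :
    ∫⁻ ω, expVal β (T ω) ∂μ ≤
      ENNReal.ofReal (1 + (Real.exp (β * m) - 1) / (1 - Real.exp (β * m) * q)) := by
  set c := Real.exp (β * m)
  have hc : 1 ≤ c := Real.one_le_exp (by positivity)
  have hq1 : q < 1 := by nlinarith
  set a : ℕ → ℝ≥0∞ := fun K => ENNReal.ofReal ((c - 1) * c ^ K)
  have hfin : ∀ᵐ ω ∂μ, T ω ≠ ⊤ := by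
    have hle K : μ {ω | T ω = ⊤} ≤ ENNReal.ofReal (q ^ K) :=
      (measure_mono fun ω (hω : T ω = ⊤) => show _ < T ω from hω ▸ ENat.natCast_lt_top _).trans
        (htail K)
    have hlim : Filter.Tendsto (fun K : ℕ => ENNReal.ofReal (q ^ K)) Filter.atTop (nhds 0) := by
      simpa using ENNReal.tendsto_ofReal (tendsto_pow_atTop_nhds_zero_of_lt_one hq hq1)
    simpa [ae_iff] using le_antisymm (ge_of_tendsto' hlim hle) bot_le
  have hbound : ∀ᵐ ω ∂μ, expVal β (T ω) ≤
      1 + ∑' K, {ω | ((m * K : ℕ) : ℕ∞) < T ω}.indicator (fun _ => a K) ω := by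
    filter_upwards [hfin] with ω hω
    obtain ⟨t, ht⟩ := ENat.ne_top_iff_exists.1 hω
    simpa only [← ht, Set.indicator_apply, Set.mem_ofPred_eq, Nat.cast_lt]
      using expVal_natCast_le hβ hm t
  have hterm K : a K * μ {ω | ((m * K : ℕ) : ℕ∞) < T ω} ≤
      ENNReal.ofReal ((c - 1) * (c * q) ^ K) := by
    calc a K * μ {ω | ((m * K : ℕ) : ℕ∞) < T ω} ≤ a K * ENNReal.ofReal (q ^ K) := by
          gcongr
          exact htail K
      _ = ENNReal.ofReal ((c - 1) * (c * q) ^ K) := by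
          rw [← ENNReal.ofReal_mul (mul_nonneg (sub_nonneg.2 hc) (by positivity)), mul_pow,
            mul_assoc]
  have hsum : HasSum (fun K : ℕ => (c - 1) * (c * q) ^ K) ((c - 1) / (1 - c * q)) := by
    simpa [div_eq_mul_inv] using
      (hasSum_geometric_of_lt_one (by positivity) hcq).mul_left (c - 1)
  calc ∫⁻ ω, expVal β (T ω) ∂μ
      ≤ ∫⁻ ω, 1 + ∑' K, {ω | ((m * K : ℕ) : ℕ∞) < T ω}.indicator (fun _ => a K) ω ∂μ :=
        lintegral_mono_ae hbound
    _ = 1 + ∑' K, a K * μ {ω | ((m * K : ℕ) : ℕ∞) < T ω} := by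
        rw [lintegral_add_left measurable_const, lintegral_const, measure_univ, one_mul,
          lintegral_tsum fun K => (measurable_const.indicator (hT _)).aemeasurable]
        simp only [lintegral_indicator_const (hT _)]
    _ ≤ 1 + ∑' K : ℕ, ENNReal.ofReal ((c - 1) * (c * q) ^ K) := by
        gcongr with K
        exact hterm K
    _ = ENNReal.ofReal (1 + (c - 1) / (1 - c * q)) := by
        rw [← ENNReal.ofReal_tsum_of_nonneg (fun K => mul_nonneg (sub_nonneg.2 hc) (by positivity))
          hsum.summable, hsum.tsum_eq, ENNReal.ofReal_add zero_le_one
          (div_nonneg (sub_nonneg.2 hc) (sub_nonneg.2 hcq.le)), ENNReal.ofReal_one]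

/-- **Exponential moments for the split chains, uniformly in the perturbation.** -/
theorem split_chain_exponential_moments {N : ℕ}
    (A : Matrix (Fin N) (Fin N) ℝ) (hA : IsTransMat A) (hAerg : UniformlyErgodic A)
    (γ : ℝ) (hγ : γ ∈ Set.Ioo (0 : ℝ) 1) :
    ∀ ε : ℝ, 0 < ε → ∃ βt : ℝ, 0 < βt ∧
      ∀ B : Matrix (Fin N) (Fin N) ℝ, IsTransMat B → (∀ i j, γ * A i j ≤ B i j) →
        ∀ (Ω : Type) [MeasurableSpace Ω]
          (μ : Fin N × Bool → Fin N × Bool → Measure Ω)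
          (X Y : ℕ → Ω → Fin N × Bool),
          (∀ x y, IsProbabilityMeasure (μ x y)) →
          (∀ (t : ℕ) (p : Fin N × Bool), MeasurableSet {ω | X t ω = p}) →
          (∀ (t : ℕ) (p : Fin N × Bool), MeasurableSet {ω | Y t ω = p}) →
          (∀ x y, μ x y {ω | X 0 ω = x ∧ Y 0 ω = y} = 1) →
          (∀ x y, IsPairChain (splitMatrix γ A B) (μ x y) X Y) →
          ∀ β : ℝ, 0 ≤ β → β ≤ βt → ∀ x y : Fin N × Bool,
            ∫⁻ ω, expVal β (meetTime X Y 0 ω) ∂(μ x y) ≤ ENNReal.ofReal (1 + ε) := by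
  intro ε hε
  obtain ⟨m, hm, δ, hδ, hδ1, hmeet⟩ := exists_le_meetProb_splitMatrix hA hAerg hγ
  set g : ℝ → ℝ := fun β => (Real.exp (β * m) - 1) / (1 - Real.exp (β * m) * (1 - δ))
  have hsmall : ∀ᶠ β in nhds 0, Real.exp (β * m) * (1 - δ) < 1 ∧ g β < ε := by
    have hg : ContinuousAt g 0 :=
      ContinuousAt.div (by fun_prop) (by fun_prop) (by simp [hδ.ne'])
    refine (ContinuousAt.eventually_lt (by fun_prop) continuousAt_const ?_).and
      (hg.eventually_lt continuousAt_const ?_) <;> simp [g, hδ, hε]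
  obtain ⟨r, hr, hball⟩ := Metric.eventually_nhds_iff.1 hsmall
  refine ⟨r / 2, half_pos hr, fun B hB hBA Ω _ μ X Y hμ hX hY _ hchain β hβ hβr x y => ?_⟩
  obtain ⟨hcq, hgε⟩ := hball <| show dist β 0 < r by
    rw [Real.dist_0_eq_abs, abs_of_nonneg hβ]
    linarith
  have hP := isTransMat_splitMatrix hA hB hγ hBA
  have := hμ x y
  calc ∫⁻ ω, expVal β (meetTime X Y 0 ω) ∂(μ x y) ≤ ENNReal.ofReal (1 + g β) := by
        refine lintegral_expVal_le_of_tail (fun n => ?_) hβ hm (sub_nonneg.2 hδ1) hcq fun K => ?_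
        · rw [setOf_natCast_lt_meetTime_zero]
          exact measurableSet_apartUpTo hX hY n
        · rw [setOf_natCast_lt_meetTime_zero, ← ofReal_measureReal]
          exact ENNReal.ofReal_le_ofReal
            ((hchain x y).measureReal_apartUpTo_mul_le hP hX hY hm hδ1 (hmeet B hB hBA) K)
    _ ≤ ENNReal.ofReal (1 + ε) := ENNReal.ofReal_le_ofReal (by linarith)

end DiscreteEBSDE
end
end
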